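/- Let p be a prime, K a finite extension of ℚ_p, and Γ a discrete subgroup of PGL(2,K). Then no element of Γ has exactly one fixed point in P¹(K); equivalently, every nontrivial element of Γ that has a fixed point in P¹(K) has exactly two fixed points in P¹(K). -/

import Mathlib

open Matrix

/-- The projective general linear group `PGL(2,K)`: the quotient of `GL(2,K)` by its
center, the subgroup of nonzero scalar matrices.  When `K` is a topological (e.g. normed)
field, it carries the quotient topology coming from the topology on `GL(2,K)` (itself
topologized as the units of the ring of 2×2 matrices over `K`). -/
abbrev PGL2 (K : Type*) [Field K] : Type _ :=
  GL (Fin 2) K ⧸ Subgroup.center (GL (Fin 2) K)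

/-- The projective line `P¹(K)`, the projectivization of the `K`-vector space `K²`. -/
abbrev ProjLine (K : Type*) [Field K] : Type _ := Projectivization K (Fin 2 → K)

/-- The (linear) action of a matrix `A ∈ GL(2,K)` on the projective line `P¹(K)`. -/
noncomputable def GL2.onProj {K : Type*} [Field K] (A : GL (Fin 2) K) :
    ProjLine K → ProjLine K :=
  Projectivization.map
    (LinearMap.GeneralLinearGroup.toLinearEquiv (Matrix.GeneralLinearGroup.toLin A)).toLinearMap
    (LinearMap.GeneralLinearGroup.toLinearEquiv (Matrix.GeneralLinearGroup.toLin A)).injective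

/-- `PGL2.MapsTo g z w` says that the element `g ∈ PGL(2,K)` sends the point `z` of the
projective line to the point `w` (via any matrix representative of `g`; the center acts
trivially, so this does not depend on the representative). -/
def PGL2.MapsTo {K : Type*} [Field K] (g : PGL2 K) (z w : ProjLine K) : Prop :=
  ∀ A : GL (Fin 2) K, (QuotientGroup.mk A : PGL2 K) = g → GL2.onProj A z = w

/-- `z` is a fixed point of `g ∈ PGL(2,K)` acting on the projective line. -/
def PGL2.Fixes {K : Type*} [Field K] (g : PGL2 K) (z : ProjLine K) : Prop :=
  PGL2.MapsTo g z z

/-- The set of fixed points of `g ∈ PGL(2,K)` on the projective line. -/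
def PGL2.fixedPts {K : Type*} [Field K] (g : PGL2 K) : Set (ProjLine K) :=
  {z | PGL2.Fixes g z}

open Filter Topology

section Aux
variable {K : Type*} [Field K]

/-- transvection units -/
def t01 : GL (Fin 2) K :=
  ⟨!![1,1;0,1], !![1,-1;0,1], by ext i j; fin_cases i <;> fin_cases j <;>
     simp [Matrix.mul_apply, Fin.sum_univ_two, Matrix.one_apply],
   by ext i j; fin_cases i <;> fin_cases j <;>
     simp [Matrix.mul_apply, Fin.sum_univ_two, Matrix.one_apply]⟩

def t10 : GL (Fin 2) K :=
  ⟨!![1,0;1,1], !![1,0;-1,1], by ext i j; fin_cases i <;> fin_cases j <;>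
     simp [Matrix.mul_apply, Fin.sum_univ_two, Matrix.one_apply],
   by ext i j; fin_cases i <;> fin_cases j <;>
     simp [Matrix.mul_apply, Fin.sum_univ_two, Matrix.one_apply]⟩

lemma commute_scalar (u : Matrix (Fin 2) (Fin 2) K)
    (h1 : u * !![0,1;0,0] = !![0,1;0,0] * u)
    (h2 : u * !![0,0;1,0] = !![0,0;1,0] * u) : u = u 0 0 • 1 := by
  have e1 := congrFun (congrFun h1 0) 1
  have e2 := congrFun (congrFun h1 1) 1
  have e3 := congrFun (congrFun h2 1) 0
  have e4 := congrFun (congrFun h2 0) 0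
  simp [Matrix.mul_apply, Fin.sum_univ_two] at e1 e2 e3 e4
  ext i j
  fin_cases i <;> fin_cases j <;> simp_all [Matrix.smul_apply, Matrix.one_apply]

/-- anything commuting (in matrices) with the two transvections is scalar -/
lemma commute_units_scalar (u : Matrix (Fin 2) (Fin 2) K)
    (h1 : u * !![1,1;0,1] = !![1,1;0,1] * u)
    (h2 : u * !![1,0;1,1] = !![1,0;1,1] * u) : u = u 0 0 • 1 := by
  apply commute_scalar
  · have : (!![1,1;0,1] : Matrix (Fin 2) (Fin 2) K) = 1 + !![0,1;0,0] := by
      ext i j; fin_cases i <;> fin_cases j <;> simp [Matrix.one_apply]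
    rw [this] at h1; rw [mul_add, add_mul, mul_one, one_mul] at h1
    exact add_left_cancel h1
  · have : (!![1,0;1,1] : Matrix (Fin 2) (Fin 2) K) = 1 + !![0,0;1,0] := by
      ext i j; fin_cases i <;> fin_cases j <;> simp [Matrix.one_apply]
    rw [this] at h2; rw [mul_add, add_mul, mul_one, one_mul] at h2
    exact add_left_cancel h2

lemma central_scalar {U : GL (Fin 2) K} (hU : U ∈ Subgroup.center (GL (Fin 2) K)) :
    (U : Matrix (Fin 2) (Fin 2) K) = (U : Matrix (Fin 2) (Fin 2) K) 0 0 • 1 := by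
  rw [Subgroup.mem_center_iff] at hU
  apply commute_units_scalar
  · have := hU t01
    simpa [t01] using congrArg (Units.val) this.symm
  · have := hU t10
    simpa [t10] using congrArg (Units.val) this.symm

lemma linmap_apply (A : GL (Fin 2) K) (v : Fin 2 → K) :
    (LinearMap.GeneralLinearGroup.toLinearEquiv
      (Matrix.GeneralLinearGroup.toLin A)).toLinearMap v = (A : Matrix (Fin 2) (Fin 2) K) *ᵥ v := by
  simp [Matrix.GeneralLinearGroup.toLin_apply]

lemma mulVec_ne_zero (A : GL (Fin 2) K) {v : Fin 2 → K} (hv : v ≠ 0) :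
    (A : Matrix (Fin 2) (Fin 2) K) *ᵥ v ≠ 0 := by
  rw [← linmap_apply]
  intro h
  exact hv ((LinearMap.GeneralLinearGroup.toLinearEquiv
      (Matrix.GeneralLinearGroup.toLin A)).map_eq_zero_iff.mp h)

lemma onProj_mk (A : GL (Fin 2) K) (v : Fin 2 → K) (hv : v ≠ 0) :
    GL2.onProj A (Projectivization.mk K v hv) =
      Projectivization.mk K ((A : Matrix (Fin 2) (Fin 2) K) *ᵥ v) (mulVec_ne_zero A hv) := by
  rw [GL2.onProj, Projectivization.map_mk]
  congr 1

lemma onProj_of_scalar {A : GL (Fin 2) K} {c : K}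
    (h : (A : Matrix (Fin 2) (Fin 2) K) = c • 1) (z : ProjLine K) : GL2.onProj A z = z := by
  have hc : c ≠ 0 := by
    rintro rfl
    simpa [h] using mulVec_ne_zero A (v := fun _ => (1:K)) (by simp [funext_iff])
  induction z using Projectivization.ind with
  | h v hv =>
    rw [onProj_mk, Projectivization.mk_eq_mk_iff]
    refine ⟨Units.mk0 c hc, ?_⟩
    simp [h, Matrix.smul_mulVec]

lemma indep_of_ne {v w : Fin 2 → K} (hv : v ≠ 0) (hw : w ≠ 0)
    (h : Projectivization.mk K v hv ≠ Projectivization.mk K w hw) :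
    LinearIndependent K ![v, w] := by
  rw [linearIndependent_fin2]
  refine ⟨by simpa using hw, fun a ha => ?_⟩
  simp only [Matrix.cons_val_one, Matrix.head_cons, Matrix.cons_val_zero] at ha
  exact h ((Projectivization.mk_eq_mk_iff' K v w hv hw).mpr ⟨a, ha⟩)

/-- A matrix fixing three distinct points of P¹ is scalar. -/
lemma scalar_of_three_fixed (A : GL (Fin 2) K) {z₁ z₂ z₃ : ProjLine K}
    (h12 : z₁ ≠ z₂) (h13 : z₁ ≠ z₃) (h23 : z₂ ≠ z₃)
    (f1 : GL2.onProj A z₁ = z₁) (f2 : GL2.onProj A z₂ = z₂) (f3 : GL2.onProj A z₃ = z₃) :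
    ∃ c : K, (A : Matrix (Fin 2) (Fin 2) K) = c • 1 := by
  induction z₁ using Projectivization.ind with | h v₁ hv₁ => ?_
  induction z₂ using Projectivization.ind with | h v₂ hv₂ => ?_
  induction z₃ using Projectivization.ind with | h v₃ hv₃ => ?_
  rw [onProj_mk, Projectivization.mk_eq_mk_iff'] at f1 f2 f3
  obtain ⟨c₁, hc₁⟩ := f1
  obtain ⟨c₂, hc₂⟩ := f2
  obtain ⟨c₃, hc₃⟩ := f3
  -- v₁, v₂ independent, hence a basis of K²
  have hind : LinearIndependent K ![v₁, v₂] := indep_of_ne hv₁ hv₂ h12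
  have hcard : Fintype.card (Fin 2) = Module.finrank K (Fin 2 → K) := by simp
  let b : Module.Basis (Fin 2) K (Fin 2 → K) := basisOfLinearIndependentOfCardEqFinrank hind hcard
  have hb0 : b 0 = v₁ := by simp [b, coe_basisOfLinearIndependentOfCardEqFinrank]
  have hb1 : b 1 = v₂ := by simp [b, coe_basisOfLinearIndependentOfCardEqFinrank]
  -- write v₃ = a • v₁ + d • v₂
  have hv3 : v₃ = b.repr v₃ 0 • v₁ + b.repr v₃ 1 • v₂ := by
    conv_lhs => rw [← b.sum_repr v₃]
    simp only [Fin.sum_univ_two, hb0, hb1]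
  set a := b.repr v₃ 0
  set d := b.repr v₃ 1
  have ha : a ≠ 0 := by
    rintro h0
    apply h23
    rw [Projectivization.mk_eq_mk_iff']
    have hd : d ≠ 0 := by rintro h1; rw [h0, h1] at hv3; simp at hv3; exact hv₃ hv3
    refine ⟨d⁻¹, ?_⟩
    rw [hv3, h0]; simp [smul_smul, inv_mul_cancel₀ hd]
  have hd : d ≠ 0 := by
    rintro h0
    apply h13
    rw [Projectivization.mk_eq_mk_iff']
    refine ⟨a⁻¹, ?_⟩
    rw [hv3, h0]; simp [smul_smul, inv_mul_cancel₀ ha]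
  -- apply A to hv3
  have happ : c₃ • v₃ = (a * c₁) • v₁ + (d * c₂) • v₂ := by
    rw [mul_smul, mul_smul, hc₁, hc₂, hc₃]
    conv_lhs => rw [hv3]
    simp [Matrix.mulVec_add, Matrix.mulVec_smul]
  have h2 : (a * c₃ - a * c₁) • v₁ + (d * c₃ - d * c₂) • v₂ = 0 := by
    have happ' : (a * c₃) • v₁ + (d * c₃) • v₂ = (a * c₁) • v₁ + (d * c₂) • v₂ := by
      rw [← happ, hv3]
      rw [smul_add, smul_smul, smul_smul, mul_comm c₃ a, mul_comm c₃ d]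
    rw [sub_smul, sub_smul]
    rw [← sub_eq_zero] at happ'
    linear_combination (norm := module) happ'
  obtain ⟨e1, e2⟩ := LinearIndependent.pair_iff.mp hind _ _ h2
  have hc31 : c₃ = c₁ := by
    rcases mul_eq_zero.mp (by linear_combination e1 : a * (c₃ - c₁) = 0) with h|h
    · exact absurd h ha
    · exact sub_eq_zero.mp h
  have hc32 : c₃ = c₂ := by
    rcases mul_eq_zero.mp (by linear_combination e2 : d * (c₃ - c₂) = 0) with h|h
    · exact absurd h hd
    · exact sub_eq_zero.mp h
  refine ⟨c₁, ?_⟩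
  have hA : Matrix.toLin' (A : Matrix (Fin 2) (Fin 2) K) = Matrix.toLin' (c₁ • 1) := by
    rw [_root_.map_smul, Matrix.toLin'_one]
    refine b.ext fun i => ?_
    fin_cases i <;>
      simp [hb0, hb1, Matrix.toLin'_apply, ← hc₁, ← hc₂, hc31 ▸ hc32]
  exact Matrix.toLin'.injective hA

lemma onProj_mul (A B : GL (Fin 2) K) (z : ProjLine K) :
    GL2.onProj (A * B) z = GL2.onProj A (GL2.onProj B z) := by
  induction z using Projectivization.ind with
  | h v hv => rw [onProj_mk, onProj_mk, onProj_mk, Projectivization.mk_eq_mk_iff']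
              exact ⟨1, by simp only [one_smul, Units.val_mul, Matrix.mulVec_mulVec]⟩

lemma onProj_eq_of_mk_eq {A B : GL (Fin 2) K}
    (h : (QuotientGroup.mk B : PGL2 K) = QuotientGroup.mk A) (z : ProjLine K) :
    GL2.onProj B z = GL2.onProj A z := by
  have hC : B⁻¹ * A ∈ Subgroup.center (GL (Fin 2) K) := (QuotientGroup.eq).mp h
  have : A = B * (B⁻¹ * A) := by group
  rw [this, onProj_mul, onProj_of_scalar (central_scalar hC) z]

lemma fixes_iff (A : GL (Fin 2) K) (z : ProjLine K) :
    PGL2.Fixes (QuotientGroup.mk A : PGL2 K) z ↔ GL2.onProj A z = z := by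
  constructor
  · exact fun h => h A rfl
  · intro h B hB
    rw [onProj_eq_of_mk_eq hB, h]

/-- scalar units are central -/
lemma scalar_mem_center (C : GL (Fin 2) K) {c : K}
    (h : (C : Matrix (Fin 2) (Fin 2) K) = c • 1) :
    C ∈ Subgroup.center (GL (Fin 2) K) := by
  rw [Subgroup.mem_center_iff]
  intro g
  ext
  simp only [Units.val_mul, h]
  rw [Matrix.mul_smul, Matrix.smul_mul, mul_one, one_mul]

lemma mk_eq_one_of_scalar {C : GL (Fin 2) K} {c : K}
    (h : (C : Matrix (Fin 2) (Fin 2) K) = c • 1) :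
    (QuotientGroup.mk C : PGL2 K) = 1 :=
  (QuotientGroup.eq_one_iff C).mpr (scalar_mem_center C h)

lemma fixedPts_one : PGL2.fixedPts (1 : PGL2 K) = Set.univ := by
  ext z
  simp only [Set.mem_univ, iff_true, PGL2.fixedPts, Set.mem_setOf_eq, PGL2.Fixes, PGL2.MapsTo]
  intro A hA
  have : A ∈ Subgroup.center (GL (Fin 2) K) := (QuotientGroup.eq_one_iff A).mp hA
  exact onProj_of_scalar (central_scalar this) z

/-- Cayley–Hamilton for 2×2 -/
lemma ch2 (M : Matrix (Fin 2) (Fin 2) K) :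
    M * M - (Matrix.trace M) • M + (M.det) • 1 = 0 := by
  ext i j
  fin_cases i <;> fin_cases j <;>
    simp [Matrix.mul_apply, Fin.sum_univ_two, Matrix.trace_fin_two, Matrix.det_fin_two,
      Matrix.one_apply] <;> ring

lemma det_sub_smul_one (M : Matrix (Fin 2) (Fin 2) K) (x : K) :
    (M - x • 1).det = x * x - Matrix.trace M * x + M.det := by
  simp [Matrix.det_fin_two, Matrix.trace_fin_two, Matrix.one_apply]
  ring

lemma pow_unipotent {N : Matrix (Fin 2) (Fin 2) K} (hN : N * N = 0) (m : ℕ) :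
    (1 + N) ^ m = 1 + (m : K) • N := by
  induction m with
  | zero => simp
  | succ m ih =>
    rw [pow_succ, ih]
    push_cast
    rw [add_mul, one_mul, mul_add, mul_one, smul_mul_assoc, hN, smul_zero]
    rw [add_smul, one_smul]
    abel

lemma e0_ne : (![1,0] : Fin 2 → K) ≠ 0 := by
  intro h; have := congrFun h 0; simp at this
lemma e1_ne : (![0,1] : Fin 2 → K) ≠ 0 := by
  intro h; have := congrFun h 1; simp at this

/-- normal form of a parabolic element -/
lemma parabolic_form {γ : PGL2 K} {z : ProjLine K}
    (hfix : PGL2.fixedPts γ = {z}) :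
    ∃ (B : GL (Fin 2) K) (N : Matrix (Fin 2) (Fin 2) K),
      (QuotientGroup.mk B : PGL2 K) = γ ∧
      (B : Matrix (Fin 2) (Fin 2) K) = 1 + N ∧ N ≠ 0 ∧ N * N = 0 := by
  obtain ⟨A, rfl⟩ := QuotientGroup.mk_surjective γ
  -- the fixed vector
  set v := z.rep with hvdef
  have hv : v ≠ 0 := z.rep_nonzero
  have hz : Projectivization.mk K v hv = z := z.mk_rep
  have hzfix : GL2.onProj A z = z := by
    rw [← fixes_iff]
    have : z ∈ PGL2.fixedPts (QuotientGroup.mk A : PGL2 K) := by rw [hfix]; rfl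
    exact this
  rw [← hz, onProj_mk, Projectivization.mk_eq_mk_iff'] at hzfix
  obtain ⟨c, hc⟩ := hzfix
  have hc0 : c ≠ 0 := by
    rintro rfl
    exact mulVec_ne_zero A hv (by rw [← hc, zero_smul])
  -- the scalar unit
  refine ?_
  let C : GL (Fin 2) K := ⟨c • 1, c⁻¹ • 1, by
      rw [Matrix.smul_mul, Matrix.mul_smul, smul_smul, mul_inv_cancel₀ hc0, one_smul, mul_one], by
      rw [Matrix.smul_mul, Matrix.mul_smul, smul_smul, inv_mul_cancel₀ hc0, one_smul, mul_one]⟩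
  have hCval : (C : Matrix (Fin 2) (Fin 2) K) = c • 1 := rfl
  have hCcen : C ∈ Subgroup.center (GL (Fin 2) K) := by
    rw [Subgroup.mem_center_iff]
    intro g; ext
    simp only [Units.val_mul, hCval]
    rw [Matrix.mul_smul, Matrix.smul_mul, mul_one, one_mul]
  let B := C⁻¹ * A
  have hmkB : (QuotientGroup.mk B : PGL2 K) = QuotientGroup.mk A := by
    have h1 : (QuotientGroup.mk C : PGL2 K) = 1 := (QuotientGroup.eq_one_iff C).mpr hCcen
    rw [QuotientGroup.mk_mul, QuotientGroup.mk_inv, h1, inv_one, one_mul]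
  have hBval : (B : Matrix (Fin 2) (Fin 2) K) = c⁻¹ • (A : Matrix (Fin 2) (Fin 2) K) := by
    show ((C⁻¹ : GL (Fin 2) K) : Matrix (Fin 2) (Fin 2) K) * _ = _
    have : ((C⁻¹ : GL (Fin 2) K) : Matrix (Fin 2) (Fin 2) K) = c⁻¹ • 1 := rfl
    rw [this, Matrix.smul_mul, one_mul]
  have hBv : (B : Matrix (Fin 2) (Fin 2) K) *ᵥ v = v := by
    rw [hBval, Matrix.smul_mulVec, ← hc, smul_smul, inv_mul_cancel₀ hc0, one_smul]
  -- determinant and trace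
  set t := Matrix.trace (B : Matrix (Fin 2) (Fin 2) K) with ht
  set d := Matrix.det (B : Matrix (Fin 2) (Fin 2) K) with hd
  have hd0 : d ≠ 0 := by
    have : IsUnit (B : Matrix (Fin 2) (Fin 2) K) := B.isUnit
    rw [Matrix.isUnit_iff_isUnit_det] at this
    exact this.ne_zero
  have hdet1 : d - t + 1 = 0 := by
    have h0 : ((B : Matrix (Fin 2) (Fin 2) K) - (1:K) • 1).det = 0 := by
      rw [← Matrix.exists_mulVec_eq_zero_iff]
      exact ⟨v, hv, by rw [Matrix.sub_mulVec, hBv, one_smul, Matrix.one_mulVec, sub_self]⟩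
    rw [det_sub_smul_one] at h0
    rw [← h0]; ring
  -- claim d = 1
  have hd1 : d = 1 := by
    by_contra hne
    have hdet : ((B : Matrix (Fin 2) (Fin 2) K) - d • 1).det = 0 := by
      rw [det_sub_smul_one]
      have : d * d - t * d + d = d * (d - t + 1) := by ring
      rw [this, hdet1, mul_zero]
    obtain ⟨w, hw, hBw⟩ := Matrix.exists_mulVec_eq_zero_iff.mpr hdet
    have hBw' : (B : Matrix (Fin 2) (Fin 2) K) *ᵥ w = d • w := by
      rw [Matrix.sub_mulVec] at hBw
      have := sub_eq_zero.mp hBw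
      rw [this, Matrix.smul_mulVec, Matrix.one_mulVec]
    -- mk w is a fixed point
    have hfw : Projectivization.mk K w hw ∈ PGL2.fixedPts (QuotientGroup.mk A : PGL2 K) := by
      show PGL2.Fixes _ _
      rw [← hmkB, fixes_iff, onProj_mk, Projectivization.mk_eq_mk_iff']
      exact ⟨d, hBw'.symm⟩
    rw [hfix, Set.mem_singleton_iff, ← hz, Projectivization.mk_eq_mk_iff'] at hfw
    obtain ⟨a, haw⟩ := hfw
    have ha0 : a ≠ 0 := by rintro rfl; rw [zero_smul] at haw; exact hw haw.symm
    -- w = a • v gives B w = w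
    have : d • w = w := by
      rw [← hBw', ← haw, Matrix.mulVec_smul, hBv]
    have h3 : (d - 1) • w = 0 := by
      rw [sub_smul, one_smul]; exact sub_eq_zero.mpr this
    rcases smul_eq_zero.mp h3 with h | h
    · exact hne (by linear_combination h)
    · exact hw h
  -- so t = 2 and N := B - 1 is square-zero
  have ht2 : t = 2 := by linear_combination (-1 : K) * hdet1 + hd1
  refine ⟨B, (B : Matrix (Fin 2) (Fin 2) K) - 1, hmkB, by abel, ?_, ?_⟩
  · -- N ≠ 0
    intro h0
    have hB1 : B = 1 := Units.ext (by rw [sub_eq_zero] at h0; simpa using h0)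
    rw [hB1] at hmkB
    have : PGL2.fixedPts (QuotientGroup.mk A : PGL2 K) = Set.univ := by
      rw [← hmkB]; simpa using (fixedPts_one (K := K))
    rw [hfix] at this
    have h1 : (Projectivization.mk K ![1,0] e0_ne : ProjLine K) ∈ ({z} : Set (ProjLine K)) := by rw [this]; trivial
    have h2 : (Projectivization.mk K ![0,1] e1_ne : ProjLine K) ∈ ({z} : Set (ProjLine K)) := by rw [this]; trivial
    rw [Set.mem_singleton_iff] at h1 h2
    rw [← h2, Projectivization.mk_eq_mk_iff'] at h1
    obtain ⟨a, haa⟩ := h1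
    have := congrFun haa 0
    simp at this
  · -- N * N = 0
    have h := ch2 (B : Matrix (Fin 2) (Fin 2) K)
    rw [← ht, ← hd, ht2, hd1] at h
    have expand : ((B : Matrix (Fin 2) (Fin 2) K) - 1) * ((B : Matrix (Fin 2) (Fin 2) K) - 1)
        = (B : Matrix (Fin 2) (Fin 2) K) * (B : Matrix (Fin 2) (Fin 2) K)
          - (2:K) • (B : Matrix (Fin 2) (Fin 2) K) + (1:K) • 1 := by
      rw [sub_mul, mul_sub, mul_sub, mul_one, one_mul, one_smul, two_smul K]
      abel_nf
      simp
    rw [expand, ← h]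

lemma unit_inv_val {M : Type*} [Monoid M] {u : Mˣ} {x : M} (h : (u : M) * x = 1) :
    ((u⁻¹ : Mˣ) : M) = x := by
  calc ((u⁻¹ : Mˣ) : M) = ((u⁻¹ : Mˣ) : M) * ((u : M) * x) := by rw [h, mul_one]
  _ = x := by rw [← mul_assoc, Units.inv_mul, one_mul]

lemma pow_val {B : GL (Fin 2) K} {N : Matrix (Fin 2) (Fin 2) K}
    (hB : (B : Matrix (Fin 2) (Fin 2) K) = 1 + N) (hN : N * N = 0) (m : ℕ) :
    ((B ^ m : GL (Fin 2) K) : Matrix (Fin 2) (Fin 2) K) = 1 + (m : K) • N := by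
  rw [Units.val_pow_eq_pow_val, hB, pow_unipotent hN]

lemma pow_inv_val {B : GL (Fin 2) K} {N : Matrix (Fin 2) (Fin 2) K}
    (hB : (B : Matrix (Fin 2) (Fin 2) K) = 1 + N) (hN : N * N = 0) (m : ℕ) :
    (((B ^ m)⁻¹ : GL (Fin 2) K) : Matrix (Fin 2) (Fin 2) K) = 1 - (m : K) • N := by
  apply unit_inv_val
  rw [pow_val hB hN]
  rw [add_mul, one_mul, mul_sub, mul_one, smul_mul_assoc, mul_smul_comm, hN,
    smul_zero, smul_zero, sub_zero]
  abel

lemma mk_pow_ne_one {B : GL (Fin 2) K} {N : Matrix (Fin 2) (Fin 2) K}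
    (hB : (B : Matrix (Fin 2) (Fin 2) K) = 1 + N) (hN : N * N = 0) (hNne : N ≠ 0)
    {m : ℕ} (hm : (m : K) ≠ 0) :
    (QuotientGroup.mk (B ^ m) : PGL2 K) ≠ 1 := by
  intro h
  have hc : B ^ m ∈ Subgroup.center (GL (Fin 2) K) := (QuotientGroup.eq_one_iff _).mp h
  have hs := central_scalar hc
  rw [pow_val hB hN] at hs
  -- 1 + m • N = e • 1 with e the (0,0) entry
  set e := (1 + (m : K) • N) 0 0 with he
  have hNs : N = ((m : K)⁻¹ * (e - 1)) • (1 : Matrix (Fin 2) (Fin 2) K) := by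
    have : (m : K) • N = e • 1 - 1 := by rw [← hs]; abel
    rw [mul_smul]
    rw [show ((e - 1) • (1 : Matrix (Fin 2) (Fin 2) K)) = e • 1 - 1 by rw [sub_smul, one_smul]]
    rw [← this, smul_smul, inv_mul_cancel₀ hm, one_smul]
  apply hNne
  have h2 : (((m : K)⁻¹ * (e - 1)) * ((m : K)⁻¹ * (e - 1))) • (1 : Matrix (Fin 2) (Fin 2) K) = 0 := by
    rw [mul_smul]
    calc (((m:K)⁻¹ * (e-1)) • ((m:K)⁻¹ * (e-1)) • (1 : Matrix (Fin 2) (Fin 2) K))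
        = (((m:K)⁻¹ * (e-1)) • (1: Matrix (Fin 2) (Fin 2) K)) * (((m:K)⁻¹ * (e-1)) • 1) := by
          rw [Matrix.smul_mul, Matrix.mul_smul, one_mul]
      _ = N * N := by rw [← hNs]
      _ = 0 := hN
  rcases smul_eq_zero.mp h2 with h | h
  · rcases mul_self_eq_zero.mp h with h'
    rw [hNs, h', zero_smul]
  · exact absurd (congrFun (congrFun h 0) 0) (by simp [Matrix.one_apply])

end Aux

section AuxNorm
variable (p : ℕ) [Fact p.Prime] {K : Type*} [NormedField K] [NormedAlgebra ℚ_[p] K]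

lemma norm_p_lt_one_K : ‖(p : K)‖ < 1 := by
  have h : algebraMap ℚ_[p] K (p : ℚ_[p]) = (p : K) := map_natCast _ p
  rw [← h, norm_algebraMap']
  exact Padic.norm_p_lt_one

lemma tendsto_matrix_pows (N : Matrix (Fin 2) (Fin 2) K) :
    Tendsto (fun k : ℕ => (1 : Matrix (Fin 2) (Fin 2) K) + ((p ^ k : ℕ) : K) • N)
      atTop (𝓝 1) := by
  have hc : Tendsto (fun k : ℕ => ((p : K)) ^ k) atTop (𝓝 0) :=
    tendsto_pow_atTop_nhds_zero_of_norm_lt_one (norm_p_lt_one_K p)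
  have hcont : Continuous (fun c : K => (1 : Matrix (Fin 2) (Fin 2) K) + c • N) := by
    continuity
  have h0 : Tendsto (fun c : K => (1 : Matrix (Fin 2) (Fin 2) K) + c • N) (𝓝 0)
      (𝓝 1) := by
    have := hcont.tendsto 0
    simpa using this
  refine (h0.comp hc).congr fun k => ?_
  simp [Function.comp, Nat.cast_pow]

lemma tendsto_GL {B : GL (Fin 2) K} {N : Matrix (Fin 2) (Fin 2) K}
    (hB : (B : Matrix (Fin 2) (Fin 2) K) = 1 + N) (hN : N * N = 0) :
    Tendsto (fun k : ℕ => B ^ (p ^ k)) atTop (𝓝 1) := by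
  rw [Units.isInducing_embedProduct.tendsto_nhds_iff]
  have h1 : Tendsto (fun k : ℕ => ((B ^ (p ^ k) : GL (Fin 2) K) : Matrix (Fin 2) (Fin 2) K))
      atTop (𝓝 1) := by
    refine (tendsto_matrix_pows p N).congr fun k => ?_
    rw [pow_val hB hN]
  have h2 : Tendsto (fun k : ℕ =>
      (((B ^ (p ^ k))⁻¹ : GL (Fin 2) K) : Matrix (Fin 2) (Fin 2) K)) atTop (𝓝 1) := by
    refine (tendsto_matrix_pows p (-N)).congr fun k => ?_
    rw [pow_inv_val hB hN, smul_neg, ← sub_eq_add_neg]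
  have h2' : Tendsto (fun k : ℕ => MulOpposite.op
      (((B ^ (p ^ k))⁻¹ : GL (Fin 2) K) : Matrix (Fin 2) (Fin 2) K)) atTop
      (𝓝 (MulOpposite.op 1)) :=
    (MulOpposite.continuous_op.tendsto 1).comp h2
  exact h1.prodMk_nhds h2'

end AuxNorm

/-- Let `p` be a prime, `K` a finite extension of `ℚ_p` (a normed field which is a finite
dimensional normed `ℚ_p`-algebra), and `Γ` a discrete subgroup of `PGL(2,K)`.  Then no
element of `Γ` has exactly one fixed point in `P¹(K)`; equivalently, every nontrivial
element of `Γ` having a fixed point in `P¹(K)` has exactly two fixed points. -/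



theorem discrete_subgroup_no_parabolic (p : ℕ) [Fact p.Prime]
    (K : Type*) [NormedField K] [NormedAlgebra ℚ_[p] K] [FiniteDimensional ℚ_[p] K]
    (Γ : Subgroup (PGL2 K)) [DiscreteTopology Γ] :
    (∀ γ ∈ Γ, (PGL2.fixedPts γ).encard ≠ 1) ∧
    (∀ γ ∈ Γ, γ ≠ 1 → (PGL2.fixedPts γ).Nonempty → (PGL2.fixedPts γ).encard = 2) := by
  have hchar : CharZero K := charZero_of_injective_algebraMap (algebraMap ℚ_[p] K).injective
  have key : ∀ γ ∈ Γ, (PGL2.fixedPts γ).encard ≠ 1 := by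
    intro γ hγ hcard
    rw [Set.encard_eq_one] at hcard
    obtain ⟨z, hz⟩ := hcard
    obtain ⟨B, N, hmkB, hB, hNne, hN⟩ := parabolic_form hz
    -- powers of γ converge to 1 in PGL₂(K)
    have hmkpow : ∀ m : ℕ, (QuotientGroup.mk (B ^ m) : PGL2 K) = γ ^ m := by
      intro m
      rw [QuotientGroup.mk_pow, hmkB]
    have htend : Tendsto (fun k : ℕ => γ ^ (p ^ k)) atTop (𝓝 (1 : PGL2 K)) := by
      have hq : Tendsto (fun k : ℕ => (QuotientGroup.mk (B ^ (p ^ k)) : PGL2 K)) atTop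
          (𝓝 (QuotientGroup.mk (1 : GL (Fin 2) K))) :=
        (QuotientGroup.continuous_mk.tendsto _).comp (tendsto_GL p hB hN)
      have h1 : (QuotientGroup.mk (1 : GL (Fin 2) K) : PGL2 K) = 1 := QuotientGroup.mk_one _
      rw [h1] at hq
      exact hq.congr fun k => hmkpow (p ^ k)
    -- discreteness gives an open set isolating 1
    have hopen : IsOpen ({1} : Set Γ) := isOpen_discrete _
    rw [isOpen_induced_iff] at hopen
    obtain ⟨U, hU, hU1⟩ := hopen
    have h1U : (1 : PGL2 K) ∈ U := by
      have : (1 : Γ) ∈ (Subtype.val ⁻¹' U : Set Γ) := by rw [hU1]; rfl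
      exact this
    have hev : ∀ᶠ k in atTop, γ ^ (p ^ k) ∈ U := htend.eventually (hU.mem_nhds h1U)
    obtain ⟨k, hk⟩ := hev.exists
    -- hence some power is trivial...
    have hmem : γ ^ (p ^ k) ∈ Γ := pow_mem hγ _
    have : (⟨γ ^ (p ^ k), hmem⟩ : Γ) ∈ (Subtype.val ⁻¹' U : Set Γ) := hk
    rw [hU1] at this
    have heq1 : γ ^ (p ^ k) = 1 := congrArg Subtype.val this
    -- ...contradicting that unipotents have infinite order
    have hne1 : γ ^ (p ^ k) ≠ 1 := by
      rw [← hmkpow]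
      exact mk_pow_ne_one hB hN hNne (by exact_mod_cast pow_ne_zero k (Nat.cast_ne_zero.mpr
        (Fact.out (p := p.Prime)).ne_zero))
    exact hne1 heq1
  refine ⟨key, ?_⟩
  intro γ hγ hne hnonempty
  obtain ⟨z₁, hz₁⟩ := hnonempty
  -- a second fixed point exists
  have hnotsingle : PGL2.fixedPts γ ≠ {z₁} := by
    intro h
    exact key γ hγ (by rw [h, Set.encard_singleton])
  have hex : ∃ z₂ ∈ PGL2.fixedPts γ, z₂ ≠ z₁ := by
    by_contra hcon
    push_neg at hcon
    exact hnotsingle (Set.eq_singleton_iff_unique_mem.mpr ⟨hz₁, hcon⟩)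
  obtain ⟨z₂, hz₂, hz21⟩ := hex
  -- there is no third fixed point
  obtain ⟨A, rfl⟩ := QuotientGroup.mk_surjective γ
  have hset : PGL2.fixedPts (QuotientGroup.mk A : PGL2 K) = {z₁, z₂} := by
    apply Set.eq_of_subset_of_subset
    · intro w hw
      by_contra hwmem
      simp only [Set.mem_insert_iff, Set.mem_singleton_iff, not_or] at hwmem
      obtain ⟨hw1, hw2⟩ := hwmem
      obtain ⟨c, hc⟩ := scalar_of_three_fixed A hz21.symm
        (fun h => hw1 h.symm) (fun h => hw2 h.symm)
        ((fixes_iff A z₁).mp hz₁) ((fixes_iff A z₂).mp hz₂) ((fixes_iff A w).mp hw)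
      exact hne (mk_eq_one_of_scalar hc)
    · rintro w (rfl | rfl)
      · exact hz₁
      · exact hz₂
  rw [hset]
  exact Set.encard_pair hz21.symm
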